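/- arXiv:0802.2861 — 2 statements merged into one kernel-verified Lean document; each statement's English description precedes it below -/
import Mathlib

section
/- Let C be a closed simplicial cone in ℝ³ and let (vᵢ)_{i ∈ I} be a nonempty family of vectors in ℝ³. Then the intersection ⋂_{i ∈ I} (vᵢ + C) of the corresponding translates of C is either empty or equal to w + C for some w ∈ ℝ³. -/
open scoped Pointwise

/-- The closed simplicial cone determined by three linearly independent linear functionals:
`{x : ℝ³ | l₁ x ≤ 0, l₂ x ≤ 0, l₃ x ≤ 0}`. -/
def simplicialCone (l : Fin 3 → (EuclideanSpace ℝ (Fin 3) →ₗ[ℝ] ℝ)) :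
    Set (EuclideanSpace ℝ (Fin 3)) :=
  {x | ∀ i, l i x ≤ 0}

/-- The intersection of any nonempty family of translates of a closed simplicial
cone `C` in ℝ³ is either empty or itself a translate of `C`. -/
theorem stmt_7 (l : Fin 3 → (EuclideanSpace ℝ (Fin 3) →ₗ[ℝ] ℝ))
    (hl : LinearIndependent ℝ l)
    {ι : Type*} [Nonempty ι] (v : ι → EuclideanSpace ℝ (Fin 3)) :
    (⋂ i, (v i +ᵥ simplicialCone l)) = ∅ ∨
      ∃ w : EuclideanSpace ℝ (Fin 3),
        (⋂ i, (v i +ᵥ simplicialCone l)) = w +ᵥ simplicialCone l := by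
  classical
  rcases Set.eq_empty_or_nonempty (⋂ i, (v i +ᵥ simplicialCone l)) with h | ⟨x₀, hx₀⟩
  · exact Or.inl h
  right
  -- membership characterization
  have hmem : ∀ (u x : EuclideanSpace ℝ (Fin 3)),
      x ∈ u +ᵥ simplicialCone l ↔ ∀ j, l j x ≤ l j u := by
    intro u x
    rw [Set.mem_vadd_set_iff_neg_vadd_mem]
    constructor
    · intro h j
      have := h j
      simp only [vadd_eq_add, map_add, map_neg] at this
      linarith
    · intro h j
      have := h j
      simp only [vadd_eq_add, map_add, map_neg]
      linarith
  have hx₀' : ∀ i j, l j x₀ ≤ l j (v i) := by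
    intro i j
    exact (hmem (v i) x₀).1 (Set.mem_iInter.1 hx₀ i) j
  -- the infima
  have hbdd : ∀ j, BddBelow (Set.range fun i => l j (v i)) :=
    fun j => ⟨l j x₀, by rintro _ ⟨i, rfl⟩; exact hx₀' i j⟩
  set c : Fin 3 → ℝ := fun j => ⨅ i, l j (v i) with hc
  -- l spans the dual, so `pi l` is a linear iso
  have hcard : Fintype.card (Fin 3) = Module.finrank ℝ
      (Module.Dual ℝ (EuclideanSpace ℝ (Fin 3))) := by
    rw [Subspace.dual_finrank_eq]; simp
  have hcard' : Fintype.card (Fin 3) = Module.finrank ℝ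
      (EuclideanSpace ℝ (Fin 3) →ₗ[ℝ] ℝ) := hcard
  have hinj : Function.Injective (LinearMap.pi l :
      EuclideanSpace ℝ (Fin 3) →ₗ[ℝ] (Fin 3 → ℝ)) := by
    rw [← LinearMap.ker_eq_bot, LinearMap.ker_eq_bot']
    intro x hx
    have hxl : ∀ j, l j x = 0 := fun j => congrFun hx j
    rw [← Module.forall_dual_apply_eq_zero_iff ℝ]
    intro φ
    have : φ ∈ Submodule.span ℝ (Set.range l) := by
      rw [hl.span_eq_top_of_card_eq_finrank hcard']; trivial
    induction this using Submodule.span_induction with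
    | mem y hy => obtain ⟨j, rfl⟩ := hy; exact hxl j
    | zero => simp
    | add y z _ _ hy hz => simp [hy, hz]
    | smul a y _ hy => simp [hy]
  have hdim : Module.finrank ℝ (EuclideanSpace ℝ (Fin 3)) =
      Module.finrank ℝ (Fin 3 → ℝ) := by simp
  obtain ⟨w, hw⟩ := (LinearMap.linearEquivOfInjective _ hinj hdim).surjective c
  have hwj : ∀ j, l j w = c j := by
    intro j
    have h2 : LinearMap.pi l w = c :=
      (LinearMap.linearEquivOfInjective_apply (f := LinearMap.pi l) hinj hdim w).symm.trans hw
    exact congrFun h2 j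
  refine ⟨w, Set.ext fun x => ?_⟩
  rw [Set.mem_iInter, hmem]
  constructor
  · intro h j
    rw [hwj]
    exact le_ciInf fun i => (hmem (v i) x).1 (h i) j
  · intro h i
    rw [hmem]
    intro j
    refine (h j).trans ?_
    rw [hwj j]
    exact ciInf_le (hbdd j) i
end

section
/- Let C be a closed simplicial cone in ℝ³ and let S ⊆ ℝ³ be a finite set of points. Then for every v ∈ ℝ³: (1) there exists v₁ ∈ ℝ³ such that S ∩ (v₁ + C) = S ∩ interior(v₁ + C) = S ∩ (v + C); and (2) there exists v₂ ∈ ℝ³ such that S ∩ (v₂ + C) = S ∩ interior(v₂ + C) = S ∩ interior(v + C). In other words, the set of points of S captured by any closed translate of C, and likewise by the interior of any translate of C, can always be realized by a translate of C having no point of S on its boundary. -/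
open scoped Pointwise

lemma mem_vadd_cone {l : Fin 3 → (EuclideanSpace ℝ (Fin 3) →ₗ[ℝ] ℝ)}
    {v x : EuclideanSpace ℝ (Fin 3)} :
    x ∈ v +ᵥ simplicialCone l ↔ ∀ i, l i x ≤ l i v := by
  rw [Set.mem_vadd_set_iff_neg_vadd_mem]
  simp only [vadd_eq_add, simplicialCone, Set.mem_setOf_eq, map_add, map_neg]
  constructor <;> intro h i <;> have := h i <;> linarith

section
variable (l : Fin 3 → (EuclideanSpace ℝ (Fin 3) →ₗ[ℝ] ℝ)) (hl : LinearIndependent ℝ l)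
include hl

noncomputable def coneEquiv : EuclideanSpace ℝ (Fin 3) ≃ₗ[ℝ] (Fin 3 → ℝ) := by
  apply LinearMap.linearEquivOfInjective (LinearMap.pi l)
  · rw [← LinearMap.ker_eq_bot, Submodule.eq_bot_iff]
    intro x hx
    have hx' : ∀ i, l i x = 0 := fun i => congrFun (show LinearMap.pi l x = 0 from hx) i
    have hspan : Submodule.span ℝ (Set.range l) = ⊤ := by
      apply hl.span_eq_top_of_card_eq_finrank
      simp [Module.finrank_linearMap, finrank_euclideanSpace]
    refine (Module.forall_dual_apply_eq_zero_iff ℝ x).mp fun φ => ?_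
    have hφ : φ ∈ Submodule.span ℝ (Set.range l) := hspan ▸ Submodule.mem_top
    induction hφ using Submodule.span_induction with
    | mem f hf => obtain ⟨i, rfl⟩ := hf; exact hx' i
    | zero => simp
    | add f g _ _ hf hg => simp [hf, hg]
    | smul c f _ hf => simp [hf]
  · simp [finrank_euclideanSpace]

lemma coneEquiv_apply (x : EuclideanSpace ℝ (Fin 3)) (i : Fin 3) :
    coneEquiv l hl x i = l i x := rfl

lemma interior_vadd_cone (v : EuclideanSpace ℝ (Fin 3)) :
    interior (v +ᵥ simplicialCone l) = {x | ∀ i, l i x < l i v} := by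
  classical
  set e := coneEquiv l hl
  have he : Continuous e := e.toLinearMap.continuous_of_finiteDimensional
  have he' : Continuous e.symm := e.symm.toLinearMap.continuous_of_finiteDimensional
  let h : EuclideanSpace ℝ (Fin 3) ≃ₜ (Fin 3 → ℝ) :=
    { toEquiv := e.toEquiv, continuous_toFun := he, continuous_invFun := he' }
  have hset : v +ᵥ simplicialCone l = h ⁻¹' (Set.pi Set.univ fun i => Set.Iic (l i v)) := by
    ext x
    simp only [Set.mem_preimage, Set.mem_pi, Set.mem_univ, forall_true_left, Set.mem_Iic]
    rw [mem_vadd_cone]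
    exact forall_congr' fun i => by rw [show h x i = l i x from rfl]
  rw [hset, ← Homeomorph.preimage_interior, interior_pi_set Set.finite_univ]
  ext x
  simp only [Set.mem_preimage, Set.mem_pi, Set.mem_univ, forall_true_left, interior_Iic,
    Set.mem_Iio, Set.mem_setOf_eq]
  exact forall_congr' fun i => by rw [show h x i = l i x from rfl]

end

/-- For a closed simplicial cone `C` in ℝ³ and a finite `S ⊆ ℝ³`, for every
translate `v + C` there are translates `v₁ + C` and `v₂ + C` with no point of `S` on their
boundaries capturing exactly `S ∩ (v + C)` resp. `S ∩ interior (v + C)`. -/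
theorem stmt_13 (l : Fin 3 → (EuclideanSpace ℝ (Fin 3) →ₗ[ℝ] ℝ))
    (hl : LinearIndependent ℝ l)
    (S : Set (EuclideanSpace ℝ (Fin 3))) (hS : S.Finite) :
    ∀ v : EuclideanSpace ℝ (Fin 3),
      (∃ v₁ : EuclideanSpace ℝ (Fin 3),
        S ∩ (v₁ +ᵥ simplicialCone l) = S ∩ interior (v₁ +ᵥ simplicialCone l) ∧
        S ∩ (v₁ +ᵥ simplicialCone l) = S ∩ (v +ᵥ simplicialCone l)) ∧
      (∃ v₂ : EuclideanSpace ℝ (Fin 3),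
        S ∩ (v₂ +ᵥ simplicialCone l) = S ∩ interior (v₂ +ᵥ simplicialCone l) ∧
        S ∩ (v₂ +ᵥ simplicialCone l) = S ∩ interior (v +ᵥ simplicialCone l)) := by
  classical
  intro v
  set e := coneEquiv l hl with he
  -- choose ε > 0 smaller than every nonzero gap |l i x - l i v| for x ∈ S
  obtain ⟨ε, hε, hgap⟩ : ∃ ε > 0, ∀ x ∈ S, ∀ i, l i x ≠ l i v → ε < |l i x - l i v| := by
    set T : Finset ℝ :=
      ((hS.toFinset ×ˢ (Finset.univ : Finset (Fin 3))).image
        fun p => |l p.2 p.1 - l p.2 v|).filter (0 < ·) with hT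
    by_cases hne : T.Nonempty
    · refine ⟨T.min' hne / 2, ?_, ?_⟩
      · have := (Finset.mem_filter.mp (T.min'_mem hne)).2
        linarith
      · intro x hx i hxi
        have hmem : |l i x - l i v| ∈ T := by
          refine Finset.mem_filter.mpr ⟨Finset.mem_image.mpr ⟨(x, i), ?_, rfl⟩, ?_⟩
          · exact Finset.mem_product.mpr ⟨hS.mem_toFinset.mpr hx, Finset.mem_univ i⟩
          · exact abs_pos.mpr (sub_ne_zero.mpr hxi)
        have h1 := T.min'_le _ hmem
        have h2 := (Finset.mem_filter.mp (T.min'_mem hne)).2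
        linarith
    · refine ⟨1, one_pos, fun x hx i hxi => absurd ?_ hne⟩
      exact ⟨|l i x - l i v|, Finset.mem_filter.mpr
        ⟨Finset.mem_image.mpr ⟨(x, i), Finset.mem_product.mpr
          ⟨hS.mem_toFinset.mpr hx, Finset.mem_univ i⟩, rfl⟩,
         abs_pos.mpr (sub_ne_zero.mpr hxi)⟩⟩
  have hw : ∀ c : ℝ, ∀ i, l i (e.symm fun _ => c) = c := by
    intro c i
    have : e (e.symm fun _ => c) = fun _ => c := e.apply_symm_apply _
    have := congrFun this i
    rwa [coneEquiv_apply] at this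
  have key2 : ∀ x ∈ S, (∀ i, l i x ≤ l i v + ε) → ∀ i, l i x ≤ l i v := by
    intro x hx h i
    by_contra hlt
    push_neg at hlt
    have hne : l i x ≠ l i v := ne_of_gt hlt
    have hg := hgap x hx i hne
    rw [abs_of_pos (by linarith)] at hg
    linarith [h i]
  have key3 : ∀ x ∈ S, (∀ i, l i x < l i v) → ∀ i, l i x < l i v + -ε := by
    intro x hx h i
    have hne : l i x ≠ l i v := ne_of_lt (h i)
    have hg := hgap x hx i hne
    rw [abs_of_neg (by linarith [h i])] at hg
    linarith
  constructor
  · refine ⟨v + e.symm fun _ => ε, ?_, ?_⟩ <;>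
      ext x <;>
      simp only [Set.mem_inter_iff, mem_vadd_cone, interior_vadd_cone l hl,
        Set.mem_setOf_eq, map_add, hw] <;>
      refine and_congr_right fun hxS => ?_
    · exact ⟨fun h i => lt_of_le_of_lt (key2 x hxS h i) (by linarith),
        fun h i => le_of_lt (h i)⟩
    · exact ⟨key2 x hxS, fun h i => by linarith [h i]⟩
  · refine ⟨v + e.symm fun _ => -ε, ?_, ?_⟩ <;>
      ext x <;>
      simp only [Set.mem_inter_iff, mem_vadd_cone, interior_vadd_cone l hl,
        Set.mem_setOf_eq, map_add, hw] <;>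
      refine and_congr_right fun hxS => ?_
    · exact ⟨fun h i => key3 x hxS (fun j => by linarith [h j]) i,
        fun h i => le_of_lt (h i)⟩
    · exact ⟨fun h i => by linarith [h i], fun h i => le_of_lt (key3 x hxS h i)⟩
end
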